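/- Optimal radix is two: for fixed real m ≥ 2, among all integer radixes r ≥ 2, the worst-case addition count f(r) = (r−1)·ln(m+1)/ln(r) − 1 attains its minimum at r = 2; that is, f(2) ≤ f(r) for all integers r ≥ 2. -/
import Mathlib

lemma nat_le_two_pow_pred : ∀ n : ℕ, 2 ≤ n → n ≤ 2 ^ (n - 1) := by
  intro n hn
  induction n with
  | zero => omega
  | succ k ih =>
    rcases Nat.lt_or_ge k 2 with h | h
    · interval_cases k <;> simp
    · have := ih h
      have hk : k + 1 - 1 = (k - 1) + 1 := by omega
      rw [hk, pow_succ]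
      omega

theorem optimal_radix_is_two (m : ℝ) (hm : 2 ≤ m) :
    ∀ r : ℕ, 2 ≤ r →
      ((2 : ℝ) - 1) * Real.log (m + 1) / Real.log 2 - 1 ≤
        ((r : ℝ) - 1) * Real.log (m + 1) / Real.log r - 1 := by
  intro r hr
  have hL : 0 ≤ Real.log (m + 1) := Real.log_nonneg (by linarith)
  have h2 : (0 : ℝ) < Real.log 2 := Real.log_pos (by norm_num)
  have hr1 : (1 : ℝ) < (r : ℝ) := by exact_mod_cast hr.trans_lt' (by norm_num)
  have hlr : (0 : ℝ) < Real.log r := Real.log_pos hr1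
  have key : Real.log r ≤ ((r : ℝ) - 1) * Real.log 2 := by
    have h := nat_le_two_pow_pred r hr
    have hcast : (r : ℝ) ≤ (2 : ℝ) ^ (r - 1 : ℕ) := by
      exact_mod_cast h
    have := Real.log_le_log (by positivity) hcast
    rw [Real.log_pow] at this
    have hcast2 : ((r - 1 : ℕ) : ℝ) = (r : ℝ) - 1 := by
      have : 1 ≤ r := by omega
      push_cast [this]; ring
    rwa [hcast2] at this
  have main : Real.log (m + 1) / Real.log 2 ≤
      ((r : ℝ) - 1) * Real.log (m + 1) / Real.log r := by
    rw [div_le_div_iff₀ h2 hlr]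
    calc Real.log (m + 1) * Real.log r
        ≤ Real.log (m + 1) * (((r : ℝ) - 1) * Real.log 2) := by
          exact mul_le_mul_of_nonneg_left key hL
      _ = ((r : ℝ) - 1) * Real.log (m + 1) * Real.log 2 := by ring
  norm_num
  linarith
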